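/- Let X be a subset of three-dimensional Euclidean space ℝ³. Suppose there is a finite subset F of X such that no 2018 pairwise distinct points of X \ F lie on a common sphere (i.e., there do not exist a point c ∈ ℝ³, a real number r, and 2018 pairwise distinct points of X \ F all at distance r from c). Then there exists a finite subset F' of X with the same property (no 2018 pairwise distinct points of X \ F' lie on a common sphere) such that F' is invariant under every isometry of ℝ³ that maps X onto itself (φ(X) = X implies φ(F') = F'), and moreover |F'| ≤ f^{2017}(|F|). -/

import Mathlib

/-- `NoSphere2018 X F` says that no 2018 pairwise distinct points of `X \ F` lie on a
common sphere in `ℝ³`. -/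
def NoSphere2018 (X F : Set (EuclideanSpace ℝ (Fin 3))) : Prop :=
  ¬ ∃ (c : EuclideanSpace ℝ (Fin 3)) (r : ℝ) (p : Fin 2018 → EuclideanSpace ℝ (Fin 3)),
      Function.Injective p ∧ (∀ i, p i ∈ X \ F) ∧ ∀ i, dist (p i) c = r

/-!
Call a set meeting every 2018-point cospherical subset of `X` a transversal, and let `U` be the
union of all inclusion-minimal transversals with at most `|F|` points. Some minimal transversal
lies inside `F`, so `U` is a transversal; an isometry preserving `X` permutes the cospherical
subsets, hence the minimal transversals, hence fixes `U`.

For the bound, take a family `𝒯` of `(d+1)`-sets with a transversal `F` of size at most `s`. A point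
`x ∉ F` of a minimal transversal `G` has a private member `T` with `T ∩ G = {x}`; choosing
`a ∈ T ∩ F`, the point `x` lies in a minimal transversal (inside `G`) of the link
`{T \ {a} | T ∈ 𝒯, a ∈ T}`, a family of `d`-sets. So `|U_{d+1}| ≤ s + s |U_d|`, and since
`s ≤ f^[d] s` this gives `|U_{d+1}| ≤ f^[d+1] s`.
-/

open Set

section Transversal

variable {α : Type*} {𝒯 : Set (Set α)} {G : Set α} {s : ℕ}

def IsTransversal (𝒯 : Set (Set α)) (G : Set α) : Prop := ∀ T ∈ 𝒯, (T ∩ G).Nonempty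

def link (𝒯 : Set (Set α)) (a : α) : Set (Set α) := (· \ {a}) '' {T ∈ 𝒯 | a ∈ T}

def unionMinimalTransversals (𝒯 : Set (Set α)) (s : ℕ) : Set α :=
  ⋃₀ {G | Minimal (IsTransversal 𝒯) G ∧ G.encard ≤ s}

lemma exists_minimal_subset_of_finite {P : Set α → Prop} {F : Set α} (hF : F.Finite)
    (hP : P F) : ∃ G ⊆ F, Minimal P G := by
  have hfin : {G | P G ∧ G ⊆ F}.Finite := hF.finite_subsets.subset fun _ h => h.2
  obtain ⟨G, hGF, hG⟩ := hfin.isPWO.exists_le_minimal (a := F) ⟨hP, subset_rfl⟩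
  exact ⟨G, hGF, hG.prop.1, fun H hH hHG => hG.2 ⟨hH, hHG.trans hGF⟩ hHG⟩

lemma Minimal.exists_inter_eq_singleton (hG : Minimal (IsTransversal 𝒯) G) {x : α}
    (hx : x ∈ G) : ∃ T ∈ 𝒯, T ∩ G = {x} := by
  have hsdiff : ¬ IsTransversal 𝒯 (G \ {x}) := fun h =>
    hG.notMem_of_prop_sdiff_singleton h hx
  simp only [IsTransversal, not_forall, not_nonempty_iff_eq_empty, exists_prop] at hsdiff
  obtain ⟨T, hT, hTG⟩ := hsdiff
  have hsub : T ∩ G ⊆ {x} := fun z hz => by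
    by_contra hzx
    exact (hTG ▸ ⟨hz.1, hz.2, hzx⟩ : z ∈ (∅ : Set α))
  obtain ⟨y, hy⟩ := hG.prop T hT
  obtain rfl : y = x := hsub hy
  exact ⟨T, hT, hsub.antisymm (singleton_subset_iff.2 hy)⟩

lemma unionMinimalTransversals_eq_empty (h𝒯 : ∀ T ∈ 𝒯, T = ∅) :
    unionMinimalTransversals 𝒯 s = ∅ := by
  refine eq_empty_of_forall_notMem fun x ⟨G, ⟨hG, _⟩, hx⟩ => ?_
  obtain ⟨T, hT, hTG⟩ := hG.exists_inter_eq_singleton hx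
  simp [h𝒯 T hT] at hTG

lemma unionMinimalTransversals_subset_sUnion :
    unionMinimalTransversals 𝒯 s ⊆ ⋃₀ 𝒯 := by
  rintro x ⟨G, ⟨hG, -⟩, hxG⟩
  obtain ⟨T, hT, hTG⟩ := hG.exists_inter_eq_singleton hxG
  exact ⟨T, hT, (hTG.symm.subset rfl).1⟩

lemma IsTransversal.unionMinimalTransversals {F : Set α} (hF : IsTransversal 𝒯 F)
    (hFfin : F.Finite) : IsTransversal 𝒯 (unionMinimalTransversals 𝒯 F.ncard) := by
  obtain ⟨G, hGF, hG⟩ := exists_minimal_subset_of_finite hFfin hF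
  intro T hT
  obtain ⟨x, hxT, hxG⟩ := hG.prop T hT
  exact ⟨x, hxT, G, ⟨hG, hFfin.cast_ncard_eq ▸ encard_le_encard hGF⟩, hxG⟩

lemma encard_eq_of_mem_link {n : ℕ} (h𝒯 : ∀ T ∈ 𝒯, T.encard = n + 1) {a : α} :
    ∀ T ∈ link 𝒯 a, T.encard = n := by
  rintro _ ⟨T, ⟨hT, haT⟩, rfl⟩
  simpa [h𝒯 T hT] using encard_sdiff_singleton_add_one haT

lemma unionMinimalTransversals_subset {F : Set α} (hF : IsTransversal 𝒯 F) :
    unionMinimalTransversals 𝒯 s ⊆ F ∪ ⋃ a ∈ F, unionMinimalTransversals (link 𝒯 a) s := by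
  rintro x ⟨G, ⟨hG, hGs⟩, hxG⟩
  by_cases hxF : x ∈ F
  · exact Or.inl hxF
  obtain ⟨T, hT, hTG⟩ := hG.exists_inter_eq_singleton hxG
  obtain ⟨a, haT, haF⟩ := hF T hT
  have haG : a ∉ G := fun haG => hxF ((hTG ▸ ⟨haT, haG⟩ : a ∈ ({x} : Set α)) ▸ haF)
  have hlink : IsTransversal (link 𝒯 a) G := by
    rintro _ ⟨T', ⟨hT', -⟩, rfl⟩
    obtain ⟨z, hzT, hzG⟩ := hG.prop T' hT'
    exact ⟨z, ⟨hzT, fun hza => haG (hza ▸ hzG)⟩, hzG⟩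
  have hGfin : G.Finite := finite_of_encard_le_coe hGs
  obtain ⟨G', hG'G, hG'⟩ := exists_minimal_subset_of_finite hGfin hlink
  obtain ⟨z, hzT, hzG'⟩ := hG'.prop (T \ {a}) ⟨T, ⟨hT, haT⟩, rfl⟩
  obtain rfl : z = x := (hTG ▸ ⟨hzT.1, hG'G hzG'⟩ : z ∈ ({x} : Set α))
  exact Or.inr <| mem_biUnion haF
    ⟨G', ⟨hG', (encard_le_encard hG'G).trans hGs⟩, hzG'⟩

lemma encard_unionMinimalTransversals_le_of_link {B : ℕ∞}
    (hB : ∀ a, (unionMinimalTransversals (link 𝒯 a) s).encard ≤ B) :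
    (unionMinimalTransversals 𝒯 s).encard ≤ s + s * B := by
  rcases (unionMinimalTransversals 𝒯 s).eq_empty_or_nonempty with hU | ⟨_, F, ⟨hF, hFs⟩, -⟩
  · simp [hU]
  have hFfin : F.Finite := finite_of_encard_le_coe hFs
  have hcard : (hFfin.toFinset.card : ℕ∞) ≤ s := hFfin.encard_eq_coe_toFinset_card ▸ hFs
  calc (unionMinimalTransversals 𝒯 s).encard
      ≤ (F ∪ ⋃ a ∈ hFfin.toFinset, unionMinimalTransversals (link 𝒯 a) s).encard := by
        simpa using encard_le_encard (unionMinimalTransversals_subset hF.prop)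
    _ ≤ F.encard + ∑ a ∈ hFfin.toFinset, (unionMinimalTransversals (link 𝒯 a) s).encard :=
        (encard_union_le _ _).trans (add_le_add_right (Finset.set_encard_biUnion_le _ _) _)
    _ ≤ s + hFfin.toFinset.card * B := by
        gcongr
        simpa using Finset.sum_le_card_nsmul _ _ B fun a _ => hB a
    _ ≤ s + s * B := by gcongr

theorem encard_unionMinimalTransversals_le (d : ℕ) (h𝒯 : ∀ T ∈ 𝒯, T.encard = d + 1) :
    (unionMinimalTransversals 𝒯 s).encard ≤ (fun x : ℕ => x * (x + 1))^[d] s := by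
  induction d generalizing 𝒯 with
  | zero =>
    have hB a : (unionMinimalTransversals (link 𝒯 a) s).encard ≤ 0 := by
      rw [unionMinimalTransversals_eq_empty fun T hT => encard_eq_zero.1
        (encard_eq_of_mem_link h𝒯 T hT), encard_empty]
    simpa using encard_unionMinimalTransversals_le_of_link hB
  | succ d ih =>
    refine (encard_unionMinimalTransversals_le_of_link
      fun a => ih (encard_eq_of_mem_link (a := a) h𝒯)).trans ?_
    set I := (fun x : ℕ => x * (x + 1))^[d] s
    have hsI : s ≤ I :=
      Function.id_le_iterate_of_id_le (fun x => Nat.le_mul_of_pos_right x x.succ_pos) d s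
    rw [Function.iterate_succ_apply']
    exact_mod_cast (calc s + s * I ≤ I + I * I := by gcongr
      _ = I * (I + 1) := by ring)

lemma IsTransversal.image {e : α ≃ α} (h𝒯 : ∀ T ∈ 𝒯, e.symm '' T ∈ 𝒯)
    (hG : IsTransversal 𝒯 G) : IsTransversal 𝒯 (e '' G) := by
  intro T hT
  obtain ⟨_, ⟨t, htT, rfl⟩, hG⟩ := hG _ (h𝒯 T hT)
  exact ⟨t, htT, e.symm t, hG, e.apply_symm_apply t⟩

lemma Minimal.isTransversal_image {e : α ≃ α} (he : ∀ T ∈ 𝒯, e '' T ∈ 𝒯)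
    (he' : ∀ T ∈ 𝒯, e.symm '' T ∈ 𝒯) (hG : Minimal (IsTransversal 𝒯) G) :
    Minimal (IsTransversal 𝒯) (e '' G) := by
  refine ⟨hG.prop.image he', fun H hH hHG => ?_⟩
  have := hG.2 (hH.image (e := e.symm) he) ((e.symm_image_subset G H).2 hHG)
  exact (e.symm.symm_image_subset H G).2 this

lemma image_unionMinimalTransversals_subset {e : α ≃ α} (he : ∀ T ∈ 𝒯, e '' T ∈ 𝒯)
    (he' : ∀ T ∈ 𝒯, e.symm '' T ∈ 𝒯) :
    e '' unionMinimalTransversals 𝒯 s ⊆ unionMinimalTransversals 𝒯 s := by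
  rintro _ ⟨x, ⟨G, ⟨hG, hGs⟩, hxG⟩, rfl⟩
  exact ⟨e '' G, ⟨hG.isTransversal_image he he', e.injective.encard_image G ▸ hGs⟩,
    mem_image_of_mem e hxG⟩

lemma image_unionMinimalTransversals {e : α ≃ α} (he : ∀ T ∈ 𝒯, e '' T ∈ 𝒯)
    (he' : ∀ T ∈ 𝒯, e.symm '' T ∈ 𝒯) :
    e '' unionMinimalTransversals 𝒯 s = unionMinimalTransversals 𝒯 s := by
  refine (image_unionMinimalTransversals_subset he he').antisymm ?_
  rw [← e.symm_image_subset]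
  exact image_unionMinimalTransversals_subset (e := e.symm) he' he

end Transversal

section Cospherical

open EuclideanGeometry

variable {P : Type*} [MetricSpace P]

def cosphericalSubsets (X : Set P) (n : ℕ) : Set (Set P) :=
  {T | T ⊆ X ∧ T.encard = n ∧ Cospherical T}

lemma Isometry.image_mem_cosphericalSubsets {f : P → P} (hf : Isometry f) {X T : Set P}
    {n : ℕ} (hX : f '' X ⊆ X) (hT : T ∈ cosphericalSubsets X n) :
    f '' T ∈ cosphericalSubsets X n := by
  obtain ⟨hTX, hTn, c, r, hcr⟩ := hT
  refine ⟨(image_mono hTX).trans hX, hf.injective.encard_image T ▸ hTn, f c, r, ?_⟩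
  rintro _ ⟨p, hp, rfl⟩
  rw [hf.dist_eq, hcr p hp]

lemma IsometryEquiv.image_unionMinimalTransversals_cosphericalSubsets (e : P ≃ᵢ P)
    {X : Set P} (hX : e '' X = X) (n s : ℕ) :
    e '' unionMinimalTransversals (cosphericalSubsets X n) s =
      unionMinimalTransversals (cosphericalSubsets X n) s :=
  image_unionMinimalTransversals (e := e.toEquiv)
    (fun _ hT => e.isometry.image_mem_cosphericalSubsets hX.le hT)
    (fun _ hT => e.symm.isometry.image_mem_cosphericalSubsets
      ((e.toEquiv.symm_image_subset X X).2 hX.ge) hT)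

end Cospherical

lemma noSphere2018_iff_isTransversal {X G : Set (EuclideanSpace ℝ (Fin 3))} :
    NoSphere2018 X G ↔ IsTransversal (cosphericalSubsets X 2018) G := by
  constructor
  · rintro h T ⟨hTX, hTcard, c, r, hcr⟩
    by_contra hTG
    have : Finite T := finite_of_encard_eq_coe hTcard
    let e : T ≃ Fin 2018 := Finite.equivFinOfCardEq <| by
      rw [Nat.card_coe_set_eq, ncard_def, hTcard]; rfl
    refine h ⟨c, r, fun i => e.symm i, Subtype.val_injective.comp e.symm.injective,
      fun i => ⟨hTX (e.symm i).2, fun hG => hTG ⟨_, (e.symm i).2, hG⟩⟩,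
      fun i => hcr _ (e.symm i).2⟩
  · rintro hG ⟨c, r, p, hp, hpXG, hpc⟩
    have hrange : range p ∈ cosphericalSubsets X 2018 := by
      refine ⟨range_subset_iff.2 fun i => (hpXG i).1, ?_, c, r, forall_mem_range.2 hpc⟩
      rw [← image_univ, hp.encard_image, encard_univ]
      simp
    obtain ⟨_, ⟨i, rfl⟩, hiG⟩ := hG _ hrange
    exact (hpXG i).2 hiG

theorem stmt_18_general (X F : Set (EuclideanSpace ℝ (Fin 3)))
    (hFfin : F.Finite) (hF : NoSphere2018 X F) :
    ∃ F' : Set (EuclideanSpace ℝ (Fin 3)), F' ⊆ X ∧ F'.Finite ∧ NoSphere2018 X F' ∧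
      (∀ φ : EuclideanSpace ℝ (Fin 3) → EuclideanSpace ℝ (Fin 3),
        Function.Bijective φ → Isometry φ → φ '' X = X → φ '' F' = F') ∧
      F'.ncard ≤ (fun x : ℕ => x * (x + 1))^[2017] F.ncard := by
  set U := unionMinimalTransversals (cosphericalSubsets X 2018) F.ncard
  obtain ⟨hUfin, hUcard⟩ := encard_le_coe_iff_finite_ncard_le.1 <|
    encard_unionMinimalTransversals_le (𝒯 := cosphericalSubsets X 2018) (s := F.ncard) 2017
      fun _ hT => hT.2.1
  refine ⟨U, ?_, hUfin, ?_, fun φ hφ hiso hX => ?_, hUcard⟩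
  · exact unionMinimalTransversals_subset_sUnion.trans <| sUnion_subset fun _ hT => hT.1
  · rw [noSphere2018_iff_isTransversal] at hF ⊢
    exact hF.unionMinimalTransversals hFfin
  · exact (IsometryEquiv.mk (Equiv.ofBijective φ hφ) hiso)
      |>.image_unionMinimalTransversals_cosphericalSubsets hX 2018 F.ncard

/-- **Problem 1.** If a finite set `F` can be removed from `X ⊆ ℝ³` so that no 2018 of the
remaining points lie on a common sphere, then such a finite set `F'` can be chosen invariant
under all isometries of `ℝ³` mapping `X` onto itself, with `|F'| ≤ f^{2017}(|F|)`
(where `f(x) = x(x+1)`). -/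
theorem stmt_18 (X F : Set (EuclideanSpace ℝ (Fin 3)))
    (hFX : F ⊆ X) (hFfin : F.Finite) (hF : NoSphere2018 X F) :
    ∃ F' : Set (EuclideanSpace ℝ (Fin 3)), F' ⊆ X ∧ F'.Finite ∧ NoSphere2018 X F' ∧
      (∀ φ : EuclideanSpace ℝ (Fin 3) → EuclideanSpace ℝ (Fin 3),
        Function.Bijective φ → Isometry φ → φ '' X = X → φ '' F' = F') ∧
      F'.ncard ≤ (fun x : ℕ => x * (x + 1))^[2017] F.ncard :=
  stmt_18_general X F hFfin hF
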